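/- Let p > 0. Assume ker A ≠ {0}, ker A is finite-dimensional, there exists ν > 0 with ⟨A u, u⟩ ≥ ν ‖u‖² for every u ∈ (ker A)^⊥, and M is a closed subspace of H with M^⊥ ∩ ker A = {0}, with orthogonal projection P_M onto M. Then every twice continuously differentiable solution u : [0,∞) → H of the equation u''(t) + u'(t) + A u(t) + ‖P_M u(t)‖^{p} P_M u(t) = 0 admits a constant M₁ such that ‖u(t)‖ ≤ M₁ (1+t)^{-1/p} for all t ≥ 0. -/

import Mathlib

open scoped RealInnerProductSpace
open Set

/-!
The energy `E = ‖u'‖²/2 + ⟪Au, u⟫/2 + ‖P_M u‖^(p+2)/(p+2)` satisfies `E' = -‖u'‖²`, so it is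
bounded by `E(0)`. The perturbed functional `L = E + ⟪u', u⟫/2 + ‖u‖²/4` dominates `‖u‖²/8` and
satisfies `L' = -D/2` with `D = ‖u'‖² + ⟪Au, u⟫ + ‖P_M u‖^(p+2)`. Because `ker A` is
finite-dimensional and meets `Mᗮ` trivially, `P_M` is bounded below on `ker A`; with the
coercivity of `A` on `(ker A)ᗮ` this gives `‖x‖² ≲ ‖P_M x‖² + ⟪Ax, x⟫`. Hence `L ≲ D + ‖P_M u‖²`,
and since `D ≤ (p+2) E(0)` and `‖P_M u‖^(p+2) ≤ D`, we get `L^(1+p/2) ≲ D`, i.e.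
`L' ≤ -γ L^(1+p/2)`. Comparison with the supersolution `K (1+t)^(-2/p)` gives
`‖u‖² ≤ 8L ≲ (1+t)^(-2/p)`.
-/

theorem Real.rpow_add_le_mul_rpow_add_rpow {a b q : ℝ} (ha : 0 ≤ a) (hb : 0 ≤ b) (hq : 1 ≤ q) :
    (a + b) ^ q ≤ 2 ^ (q - 1) * (a ^ q + b ^ q) := by
  lift a to NNReal using ha
  lift b to NNReal using hb
  exact_mod_cast NNReal.rpow_add_le_mul_rpow_add_rpow a b hq

theorem Real.rpow_le_rpow_sub_one_mul {x y q : ℝ} (hx : 0 ≤ x) (hxy : x ≤ y) (hq : 1 ≤ q) :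
    x ^ q ≤ y ^ (q - 1) * x := by
  calc x ^ q = x ^ (q - 1) * x := by
        rw [← Real.rpow_add_one' hx (by linarith), sub_add_cancel]
    _ ≤ y ^ (q - 1) * x := by gcongr

theorem exists_le_mul_one_add_rpow_neg_of_deriv_le {L L' : ℝ → ℝ} {γ α : ℝ}
    (hγ : 0 < γ) (hα : 0 < α)
    (hL : ∀ t ∈ Ici (0 : ℝ), HasDerivWithinAt L (L' t) (Ici 0) t)
    (hL' : ∀ t ∈ Ici (0 : ℝ), L' t ≤ -γ * L t ^ (1 + α)) :
    ∃ K, ∀ t ∈ Ici (0 : ℝ), L t ≤ K * (1 + t) ^ (-α⁻¹) := by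
  set K := max (L 0) ((α * γ)⁻¹ ^ α⁻¹) + 1
  have hK₀ : L 0 < K := by have := le_max_left (L 0) ((α * γ)⁻¹ ^ α⁻¹); linarith
  have hK_pos : 0 < K := by
    have := le_max_right (L 0) ((α * γ)⁻¹ ^ α⁻¹)
    have : 0 ≤ (α * γ)⁻¹ ^ α⁻¹ := by positivity
    linarith
  -- `K` is large enough that `K (1 + t) ^ (-1/α)` is a strict supersolution
  have hK_pow : α⁻¹ < γ * K ^ α := by
    have h : (α * γ)⁻¹ ^ α⁻¹ < K := by have := le_max_right (L 0) ((α * γ)⁻¹ ^ α⁻¹); linarith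
    have h' : (α * γ)⁻¹ < K ^ α := by
      calc (α * γ)⁻¹ = ((α * γ)⁻¹ ^ α⁻¹) ^ α := by
            rw [← Real.rpow_mul (by positivity), inv_mul_cancel₀ hα.ne', Real.rpow_one]
        _ < K ^ α := by gcongr
    calc α⁻¹ = γ * (α * γ)⁻¹ := by field_simp
      _ < γ * K ^ α := by gcongr
  have hB : ∀ t ∈ Ici (0 : ℝ), HasDerivAt (fun t => K * (1 + t) ^ (-α⁻¹))
      (K * (-α⁻¹ * (1 + t) ^ (-α⁻¹ - 1))) t := by
    intro t ht
    have h : 0 < 1 + t := by linarith [mem_Ici.1 ht]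
    simpa using ((Real.hasDerivAt_rpow_const (p := -α⁻¹) (Or.inl h.ne')).comp t
      ((hasDerivAt_id t).const_add 1)).const_mul K
  refine ⟨K, fun T hT => ?_⟩
  refine image_le_of_deriv_right_lt_deriv_boundary' (a := 0) (b := T)
    (fun t ht => (hL t ht.1).continuousWithinAt.mono Icc_subset_Ici_self)
    (fun t ht => (hL t ht.1).mono (Ici_subset_Ici.2 ht.1)) (by simpa using hK₀.le)
    (fun t ht => (hB t ht.1).continuousAt.continuousWithinAt)
    (fun t ht => (hB t ht.1).hasDerivWithinAt) ?_ ⟨hT, le_rfl⟩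
  intro t ht hLB
  have h : 0 < 1 + t := by linarith [ht.1]
  have hB_pow : (K * (1 + t) ^ (-α⁻¹)) ^ (1 + α) = K * K ^ α * (1 + t) ^ (-α⁻¹ - 1) := by
    rw [Real.mul_rpow hK_pos.le (by positivity), ← Real.rpow_mul h.le,
      Real.rpow_one_add' hK_pos.le (by positivity)]
    congr 2
    field_simp
    ring
  calc L' t ≤ -γ * L t ^ (1 + α) := hL' t ht.1
    _ = -(γ * K ^ α) * (K * (1 + t) ^ (-α⁻¹ - 1)) := by rw [hLB, hB_pow]; ring
    _ < -α⁻¹ * (K * (1 + t) ^ (-α⁻¹ - 1)) := by gcongr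
    _ = K * (-α⁻¹ * (1 + t) ^ (-α⁻¹ - 1)) := by ring

theorem Submodule.exists_norm_le_mul_norm_of_ker_inf_eq_bot {E F : Type*} [NormedAddCommGroup E]
    [NormedSpace ℝ E] [NormedAddCommGroup F] [NormedSpace ℝ F] {K : Submodule ℝ E}
    [FiniteDimensional ℝ K] {P : E →ₗ[ℝ] F} (hP : LinearMap.ker P ⊓ K = ⊥) :
    ∃ c ≥ 0, ∀ y ∈ K, ‖y‖ ≤ c * ‖P y‖ := by
  have hinj : LinearMap.ker (P ∘ₗ K.subtype) = ⊥ := by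
    rw [LinearMap.ker_comp, ← Submodule.disjoint_iff_comap_eq_bot, disjoint_iff, inf_comm, hP]
  obtain ⟨c, -, hc⟩ := (P ∘ₗ K.subtype).exists_antilipschitzWith hinj
  refine ⟨c, c.2, fun y hy => ?_⟩
  simpa using hc.le_mul_dist ⟨y, hy⟩ 0

noncomputable section

variable {H : Type*} [NormedAddCommGroup H] [InnerProductSpace ℝ H]

theorem ContinuousLinearMap.exists_sq_norm_le_mul_sq_norm_add_inner {A P : H →L[ℝ] H}
    (hA : (A : H →ₗ[ℝ] H).IsSymmetric) [FiniteDimensional ℝ (LinearMap.ker (A : H →ₗ[ℝ] H))] {ν : ℝ}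
    (hν : 0 < ν) (hcoerc : ∀ u ∈ (LinearMap.ker (A : H →ₗ[ℝ] H))ᗮ, ν * ‖u‖ ^ 2 ≤ ⟪A u, u⟫)
    (hP : LinearMap.ker (P : H →ₗ[ℝ] H) ⊓ LinearMap.ker (A : H →ₗ[ℝ] H) = ⊥) :
    ∃ C ≥ 0, ∀ x, ‖x‖ ^ 2 ≤ C * (‖P x‖ ^ 2 + ⟪A x, x⟫) := by
  obtain ⟨c, hc0, hc⟩ := Submodule.exists_norm_le_mul_norm_of_ker_inf_eq_bot hP
  refine ⟨2 * c ^ 2 + 2 * (c * ‖P‖ + 1) ^ 2 / ν, by positivity, fun x => ?_⟩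
  obtain ⟨y, hy, z, hz, rfl⟩ := (LinearMap.ker (A : H →ₗ[ℝ] H)).exists_add_mem_mem_orthogonal x
  have hAy : A y = 0 := hy
  have hA_inner : ⟪A (y + z), y + z⟫ = ⟪A z, z⟫ := by
    have hzy : ⟪A z, y⟫ = 0 := by simpa [hAy] using hA z y
    rw [map_add, hAy, zero_add, inner_add_right, hzy, zero_add]
  have hz_le : ν * ‖z‖ ^ 2 ≤ ⟪A z, z⟫ := hcoerc z hz
  have hnorm : ‖y + z‖ ≤ c * ‖P (y + z)‖ + (c * ‖P‖ + 1) * ‖z‖ := by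
    have hPy : ‖P y‖ ≤ ‖P (y + z)‖ + ‖P‖ * ‖z‖ := by
      calc ‖P y‖ = ‖P (y + z) - P z‖ := by rw [map_add, add_sub_cancel_right]
        _ ≤ ‖P (y + z)‖ + ‖P z‖ := norm_sub_le _ _
        _ ≤ ‖P (y + z)‖ + ‖P‖ * ‖z‖ := by gcongr; exact P.le_opNorm z
    calc ‖y + z‖ ≤ ‖y‖ + ‖z‖ := norm_add_le y z
      _ ≤ c * ‖P y‖ + ‖z‖ := by gcongr; exact hc y hy
      _ ≤ c * (‖P (y + z)‖ + ‖P‖ * ‖z‖) + ‖z‖ := by gcongr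
      _ = c * ‖P (y + z)‖ + (c * ‖P‖ + 1) * ‖z‖ := by ring
  set d := c * ‖P‖ + 1
  have hAz : 0 ≤ ⟪A z, z⟫ := le_trans (by positivity) hz_le
  have hz_sq : ‖z‖ ^ 2 ≤ ⟪A z, z⟫ / ν := by rw [le_div_iff₀ hν]; linarith
  rw [hA_inner]
  calc ‖y + z‖ ^ 2 ≤ (c * ‖P (y + z)‖ + d * ‖z‖) ^ 2 := by gcongr
    _ ≤ 2 * c ^ 2 * ‖P (y + z)‖ ^ 2 + 2 * d ^ 2 * ‖z‖ ^ 2 := by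
      nlinarith [sq_nonneg (c * ‖P (y + z)‖ - d * ‖z‖)]
    _ ≤ 2 * c ^ 2 * ‖P (y + z)‖ ^ 2 + 2 * d ^ 2 * (⟪A z, z⟫ / ν) := by gcongr
    _ ≤ 2 * c ^ 2 * ‖P (y + z)‖ ^ 2 + 2 * d ^ 2 * (⟪A z, z⟫ / ν)
        + (2 * c ^ 2 * ⟪A z, z⟫ + 2 * d ^ 2 / ν * ‖P (y + z)‖ ^ 2) :=
      le_add_of_nonneg_right (by positivity)
    _ = (2 * c ^ 2 + 2 * d ^ 2 / ν) * (‖P (y + z)‖ ^ 2 + ⟪A z, z⟫) := by ring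

theorem HasDerivWithinAt.norm_rpow {f : ℝ → H} {f' : H} {s : Set ℝ} {t q : ℝ}
    (hf : HasDerivWithinAt f f' s t) (hq : 1 < q) :
    HasDerivWithinAt (fun τ => ‖f τ‖ ^ q) (q * ‖f t‖ ^ (q - 2) * ⟪f t, f'⟫) s t := by
  have h := (hasFDerivAt_norm_rpow (f t) hq).comp_hasDerivWithinAt t hf
  simp only [smul_apply, innerSL_apply_apply, smul_eq_mul] at h
  exact h

theorem inner_map_map_of_mem_orthogonal {M : Submodule ℝ H} {P : H → H}
    (hP : ∀ x, P x ∈ M ∧ x - P x ∈ Mᗮ) (x y : H) : ⟪P x, P y⟫ = ⟪P x, y⟫ := by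
  have h : ⟪P x, y - P y⟫ = 0 := Submodule.inner_right_of_mem_orthogonal (hP x).1 (hP y).2
  rw [inner_sub_right, sub_eq_zero] at h
  exact h.symm

namespace NonlocalDamped

variable (A P : H →L[ℝ] H) (p : ℝ)

-- Functionals of the state `(x, y) = (u t, u' t)` of the equation.

def energy (x y : H) : ℝ := ‖y‖ ^ 2 / 2 + ⟪A x, x⟫ / 2 + ‖P x‖ ^ (p + 2) / (p + 2)

def dissipation (x y : H) : ℝ := ‖y‖ ^ 2 + ⟪A x, x⟫ + ‖P x‖ ^ (p + 2)

def lyapunov (x y : H) : ℝ := energy A P p x y + ⟪y, x⟫ / 2 + ‖x‖ ^ 2 / 4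

variable {A P p} {u v : ℝ → H} {a : H} {s : Set ℝ} {t : ℝ}

theorem hasDerivWithinAt_energy (hA : (A : H →ₗ[ℝ] H).IsSymmetric)
    (hP : ∀ x y, ⟪P x, P y⟫ = ⟪P x, y⟫) (hp : -1 < p)
    (hu : HasDerivWithinAt u (v t) s t) (hv : HasDerivWithinAt v a s t)
    (heq : a + v t + A (u t) + ‖P (u t)‖ ^ p • P (u t) = 0) :
    HasDerivWithinAt (fun τ => energy A P p (u τ) (v τ)) (-‖v t‖ ^ 2) s t := by
  have hAu : HasDerivWithinAt (fun τ => A (u τ)) (A (v t)) s t :=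
    A.hasFDerivAt.comp_hasDerivWithinAt t hu
  have hPu : HasDerivWithinAt (fun τ => P (u τ)) (P (v t)) s t :=
    P.hasFDerivAt.comp_hasDerivWithinAt t hu
  have h := ((hv.norm_sq.div_const 2).add ((hAu.inner ℝ hu).div_const 2)).add
    ((hPu.norm_rpow (by linarith : 1 < p + 2)).div_const (p + 2))
  refine h.congr_deriv ?_
  have ha : a = -(v t + A (u t) + ‖P (u t)‖ ^ p • P (u t)) := eq_neg_of_add_eq_zero_left (by
    rw [← heq]; abel)
  have hAvu : ⟪A (v t), u t⟫ = ⟪A (u t), v t⟫ := by rw [real_inner_comm]; exact (hA _ _).symm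
  rw [ha, hP, hAvu]
  simp only [inner_neg_right, inner_add_right, inner_smul_right, real_inner_self_eq_norm_sq,
    add_sub_cancel_right, real_inner_comm (v t)]
  have hp2 : p + 2 ≠ 0 := by linarith
  field_simp
  ring

theorem energy_le_energy_zero {w : ℝ → H} (hA : (A : H →ₗ[ℝ] H).IsSymmetric)
    (hP : ∀ x y, ⟪P x, P y⟫ = ⟪P x, y⟫) (hp : -1 < p)
    (hu : ∀ t ∈ Ici (0 : ℝ), HasDerivWithinAt u (v t) (Ici 0) t)
    (hv : ∀ t ∈ Ici (0 : ℝ), HasDerivWithinAt v (w t) (Ici 0) t)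
    (heq : ∀ t ∈ Ici (0 : ℝ), w t + v t + A (u t) + ‖P (u t)‖ ^ p • P (u t) = 0) :
    ∀ t ∈ Ici (0 : ℝ), energy A P p (u t) (v t) ≤ energy A P p (u 0) (v 0) := by
  have hE t (ht : t ∈ Ici (0 : ℝ)) :=
    hasDerivWithinAt_energy hA hP hp (hu t ht) (hv t ht) (heq t ht)
  have hanti : AntitoneOn (fun t => energy A P p (u t) (v t)) (Ici 0) := by
    refine antitoneOn_of_hasDerivWithinAt_nonpos (f' := fun t => -‖v t‖ ^ 2) (convex_Ici 0)
      (fun t ht => (hE t ht).continuousWithinAt) (fun t ht => ?_) (fun t _ => ?_)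
    · rw [interior_Ici] at ht ⊢
      exact (hE t (Ioi_subset_Ici_self ht)).mono Ioi_subset_Ici_self
    · exact neg_nonpos.2 (sq_nonneg _)
  exact fun t ht => hanti self_mem_Ici ht ht

theorem hasDerivWithinAt_lyapunov (hA : (A : H →ₗ[ℝ] H).IsSymmetric)
    (hP : ∀ x y, ⟪P x, P y⟫ = ⟪P x, y⟫) (hp : -1 < p)
    (hu : HasDerivWithinAt u (v t) s t) (hv : HasDerivWithinAt v a s t)
    (heq : a + v t + A (u t) + ‖P (u t)‖ ^ p • P (u t) = 0) :
    HasDerivWithinAt (fun τ => lyapunov A P p (u τ) (v τ))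
      (-dissipation A P p (u t) (v t) / 2) s t := by
  have h := ((hasDerivWithinAt_energy hA hP hp hu hv heq).add ((hv.inner ℝ hu).div_const 2)).add
    (hu.norm_sq.div_const 4)
  refine h.congr_deriv ?_
  have ha : a = -(v t + A (u t) + ‖P (u t)‖ ^ p • P (u t)) := eq_neg_of_add_eq_zero_left (by
    rw [← heq]; abel)
  have hPu : ‖P (u t)‖ ^ p * ⟪P (u t), u t⟫ = ‖P (u t)‖ ^ (p + 2) := by
    rw [← hP, real_inner_self_eq_norm_sq, Real.rpow_add' (norm_nonneg _) (by linarith),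
      Real.rpow_two]
  rw [ha, inner_neg_left, inner_add_left, inner_add_left, real_inner_smul_left, hPu,
    real_inner_self_eq_norm_sq, real_inner_comm (u t), dissipation]
  ring

section Estimates

variable (x y : H)

theorem sq_norm_le_eight_mul_lyapunov (hApos : ∀ x, 0 ≤ ⟪A x, x⟫) (hp : -2 ≤ p) :
    ‖x‖ ^ 2 ≤ 8 * lyapunov A P p x y := by
  have hF : 0 ≤ ‖P x‖ ^ (p + 2) / (p + 2) := div_nonneg (by positivity) (by linarith)
  have hyx : -⟪y, x⟫ ≤ ‖y‖ ^ 2 + ‖x‖ ^ 2 / 4 := by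
    nlinarith [neg_le_of_abs_le (abs_real_inner_le_norm y x), sq_nonneg (‖y‖ - ‖x‖ / 2)]
  simp only [lyapunov, energy]
  linarith [hApos x]

theorem energy_nonneg (hApos : ∀ x, 0 ≤ ⟪A x, x⟫) (hp : -2 ≤ p) : 0 ≤ energy A P p x y := by
  have hF : 0 ≤ ‖P x‖ ^ (p + 2) / (p + 2) := div_nonneg (by positivity) (by linarith)
  have := hApos x
  unfold energy
  positivity

theorem dissipation_le_mul_energy (hApos : ∀ x, 0 ≤ ⟪A x, x⟫) (hp : 0 ≤ p) :
    dissipation A P p x y ≤ (p + 2) * energy A P p x y := by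
  have hp2 : p + 2 ≠ 0 := by linarith
  have h : (p + 2) * energy A P p x y
      = (1 + p / 2) * ‖y‖ ^ 2 + (1 + p / 2) * ⟪A x, x⟫ + ‖P x‖ ^ (p + 2) := by
    simp only [energy]; field_simp; ring
  rw [h, dissipation]
  have := hApos x
  have : 0 ≤ p / 2 * ‖y‖ ^ 2 + p / 2 * ⟪A x, x⟫ := by positivity
  linarith

theorem lyapunov_le_mul_dissipation_add (hApos : ∀ x, 0 ≤ ⟪A x, x⟫) (hp : -1 ≤ p) {C : ℝ}
    (hC0 : 0 ≤ C) (hC : ‖x‖ ^ 2 ≤ C * (‖P x‖ ^ 2 + ⟪A x, x⟫)) :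
    lyapunov A P p x y ≤ (1 + C) * (dissipation A P p x y + ‖P x‖ ^ 2) := by
  have hF : ‖P x‖ ^ (p + 2) / (p + 2) ≤ ‖P x‖ ^ (p + 2) :=
    div_le_self (by positivity) (by linarith)
  have hyx : ⟪y, x⟫ ≤ ‖y‖ ^ 2 + ‖x‖ ^ 2 / 4 := by
    nlinarith [le_of_abs_le (abs_real_inner_le_norm y x), sq_nonneg (‖y‖ - ‖x‖ / 2)]
  have hAD : ⟪A x, x⟫ ≤ dissipation A P p x y := by
    have : 0 ≤ ‖P x‖ ^ (p + 2) := by positivity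
    unfold dissipation; linarith [sq_nonneg ‖y‖]
  have hCA : C * ⟪A x, x⟫ ≤ C * dissipation A P p x y := by gcongr
  calc lyapunov A P p x y ≤ dissipation A P p x y + ‖x‖ ^ 2 := by
        simp only [lyapunov, energy, dissipation]; linarith [hApos x, sq_nonneg ‖x‖]
    _ ≤ dissipation A P p x y + C * (‖P x‖ ^ 2 + dissipation A P p x y) := by
        rw [mul_add] at hC ⊢; linarith
    _ ≤ (1 + C) * (dissipation A P p x y + ‖P x‖ ^ 2) := by linarith [sq_nonneg ‖P x‖]

theorem exists_lyapunov_rpow_le_mul_dissipation (hApos : ∀ x, 0 ≤ ⟪A x, x⟫) (hp : 0 ≤ p) {C : ℝ}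
    (hC0 : 0 ≤ C) (hC : ∀ x, ‖x‖ ^ 2 ≤ C * (‖P x‖ ^ 2 + ⟪A x, x⟫)) {E₀ : ℝ} (hE₀ : 0 ≤ E₀) :
    ∃ c > 0, ∀ x y, energy A P p x y ≤ E₀ →
      lyapunov A P p x y ^ (1 + p / 2) ≤ c * dissipation A P p x y := by
  set q := 1 + p / 2
  have hq : 1 ≤ q := by simp only [q]; linarith
  refine ⟨(1 + C) ^ q * 2 ^ (q - 1) * (((p + 2) * E₀) ^ (q - 1) + 1), by positivity,
    fun x y hE => ?_⟩
  set D := dissipation A P p x y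
  set g := ‖P x‖ ^ 2
  have hD0 : 0 ≤ D := by have := hApos x; unfold D dissipation; positivity
  have hDE : D ≤ (p + 2) * E₀ :=
    (dissipation_le_mul_energy x y hApos hp).trans (by gcongr)
  have hgD : g ^ q ≤ D := by
    have : g ^ q = ‖P x‖ ^ (p + 2) := by
      simp only [g, q]
      rw [← Real.rpow_natCast, ← Real.rpow_mul (norm_nonneg _)]; congr 1; push_cast; ring
    rw [this]; unfold D dissipation; linarith [hApos x, sq_nonneg ‖y‖]
  calc lyapunov A P p x y ^ q ≤ ((1 + C) * (D + g)) ^ q := by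
        gcongr
        · have := sq_norm_le_eight_mul_lyapunov (P := P) x y hApos (by linarith : -2 ≤ p)
          linarith [sq_nonneg ‖x‖]
        · exact lyapunov_le_mul_dissipation_add x y hApos (by linarith) hC0 (hC x)
    _ = (1 + C) ^ q * (D + g) ^ q := Real.mul_rpow (by linarith) (by positivity)
    _ ≤ (1 + C) ^ q * (2 ^ (q - 1) * (((p + 2) * E₀) ^ (q - 1) * D + D)) := by
        gcongr
        refine (Real.rpow_add_le_mul_rpow_add_rpow hD0 (by positivity) hq).trans ?_
        gcongr
        exact Real.rpow_le_rpow_sub_one_mul hD0 hDE hq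
    _ = (1 + C) ^ q * 2 ^ (q - 1) * (((p + 2) * E₀) ^ (q - 1) + 1) * D := by ring

end Estimates

end NonlocalDamped

end

open NonlocalDamped

theorem stmt_14_general
    {H : Type*} [NormedAddCommGroup H] [InnerProductSpace ℝ H] [CompleteSpace H]
    (A : H →L[ℝ] H) (hA : IsSelfAdjoint A) (hApos : ∀ u : H, 0 ≤ ⟪A u, u⟫)
    [FiniteDimensional ℝ (LinearMap.ker (A : H →ₗ[ℝ] H))]
    (ν : ℝ) (hν : 0 < ν)
    (hcoerc : ∀ u ∈ (LinearMap.ker (A : H →ₗ[ℝ] H))ᗮ, ν * ‖u‖^2 ≤ ⟪A u, u⟫)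
    (M : Submodule ℝ H)
    (hKM : Mᗮ ⊓ LinearMap.ker (A : H →ₗ[ℝ] H) = ⊥)
    (PM : H →L[ℝ] H)
    (hPM : ∀ x : H, PM x ∈ M ∧ x - PM x ∈ Mᗮ)
    (p : ℝ) (hp : 0 < p)
    (u v w : ℝ → H)
    (hu : ∀ t ∈ Set.Ici (0:ℝ), HasDerivWithinAt u (v t) (Set.Ici 0) t)
    (hv : ∀ t ∈ Set.Ici (0:ℝ), HasDerivWithinAt v (w t) (Set.Ici 0) t)
    (heq : ∀ t ∈ Set.Ici (0:ℝ),
      w t + v t + A (u t) + ‖PM (u t)‖ ^ p • PM (u t) = 0) :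
    ∃ M₁ : ℝ, ∀ t ∈ Set.Ici (0:ℝ), ‖u t‖ ≤ M₁ * (1 + t) ^ (-(1/p)) := by
  have hP := inner_map_map_of_mem_orthogonal hPM
  have hker : LinearMap.ker (PM : H →ₗ[ℝ] H) ⊓ LinearMap.ker (A : H →ₗ[ℝ] H) = ⊥ := by
    refine eq_bot_iff.2 (le_trans (inf_le_inf_right _ fun x hx => ?_) hKM.le)
    simpa [show PM x = 0 from hx] using (hPM x).2
  obtain ⟨C, hC0, hC⟩ :=
    ContinuousLinearMap.exists_sq_norm_le_mul_sq_norm_add_inner hA.isSymmetric hν hcoerc hker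
  obtain ⟨c, hc0, hc⟩ := exists_lyapunov_rpow_le_mul_dissipation hApos hp.le hC0 hC
    (energy_nonneg (P := PM) (p := p) (u 0) (v 0) hApos (by linarith))
  have hE := energy_le_energy_zero hA.isSymmetric hP (by linarith) hu hv heq
  have hL t (ht : t ∈ Ici (0 : ℝ)) :=
    hasDerivWithinAt_lyapunov hA.isSymmetric hP (by linarith) (hu t ht) (hv t ht) (heq t ht)
  obtain ⟨K, hK⟩ := exists_le_mul_one_add_rpow_neg_of_deriv_le (γ := (2 * c)⁻¹) (α := p / 2)
    (by positivity) (by positivity) hL fun t ht => by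
      rw [neg_mul, neg_div, neg_le_neg_iff]
      calc (2 * c)⁻¹ * lyapunov A PM p (u t) (v t) ^ (1 + p / 2)
          ≤ (2 * c)⁻¹ * (c * dissipation A PM p (u t) (v t)) := by gcongr; exact hc _ _ (hE t ht)
        _ = dissipation A PM p (u t) (v t) / 2 := by field_simp
  refine ⟨√(8 * K), fun t ht => ?_⟩
  have h1t : 0 ≤ 1 + t := by linarith [mem_Ici.1 ht]
  calc ‖u t‖ = √(‖u t‖ ^ 2) := (Real.sqrt_sq (norm_nonneg _)).symm
    _ ≤ √(8 * K * (1 + t) ^ (-(p / 2)⁻¹)) := by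
      gcongr
      have := sq_norm_le_eight_mul_lyapunov (P := PM) (p := p) (u t) (v t) hApos (by linarith)
      linarith [hK t ht]
    _ = √(8 * K) * (1 + t) ^ (-(1 / p)) := by
      rw [Real.sqrt_mul' _ (by positivity), Real.sqrt_eq_rpow ((1 + t) ^ _), ← Real.rpow_mul h1t]
      congr 2
      field_simp

/-- Decay for all solutions of the nonlocal equation
`u'' + u' + A u + ‖P_M u‖^p P_M u = 0`: under the stated hypotheses on `A` and `M`,
every twice continuously differentiable solution satisfies `‖u(t)‖ ≤ M₁ (1+t)^{-1/p}`. -/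
theorem stmt_14
    {H : Type*} [NormedAddCommGroup H] [InnerProductSpace ℝ H] [CompleteSpace H]
    (A : H →L[ℝ] H) (hA : IsSelfAdjoint A) (hApos : ∀ u : H, 0 ≤ ⟪A u, u⟫)
    (hker : LinearMap.ker (A : H →ₗ[ℝ] H) ≠ ⊥)
    [FiniteDimensional ℝ (LinearMap.ker (A : H →ₗ[ℝ] H))]
    (ν : ℝ) (hν : 0 < ν)
    (hcoerc : ∀ u ∈ (LinearMap.ker (A : H →ₗ[ℝ] H))ᗮ, ν * ‖u‖^2 ≤ ⟪A u, u⟫)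
    (M : Submodule ℝ H) (hMclosed : IsClosed (M : Set H))
    (hKM : Mᗮ ⊓ LinearMap.ker (A : H →ₗ[ℝ] H) = ⊥)
    (PM : H →L[ℝ] H)
    (hPM : ∀ x : H, PM x ∈ M ∧ x - PM x ∈ Mᗮ)
    (p : ℝ) (hp : 0 < p)
    (u v w : ℝ → H)
    (hu : ∀ t ∈ Set.Ici (0:ℝ), HasDerivWithinAt u (v t) (Set.Ici 0) t)
    (hv : ∀ t ∈ Set.Ici (0:ℝ), HasDerivWithinAt v (w t) (Set.Ici 0) t)
    (hw : ContinuousOn w (Set.Ici 0))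
    (heq : ∀ t ∈ Set.Ici (0:ℝ),
      w t + v t + A (u t) + ‖PM (u t)‖ ^ p • PM (u t) = 0) :
    ∃ M₁ : ℝ, ∀ t ∈ Set.Ici (0:ℝ), ‖u t‖ ≤ M₁ * (1 + t) ^ (-(1/p)) :=
  stmt_14_general A hA hApos ν hν hcoerc M hKM PM hPM p hp u v w hu hv heq
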